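/- arXiv:1103.5405 — 2 statements merged into one kernel-verified Lean document; each statement's English description precedes it below -/
import Mathlib

section
/- Let A be a real ℓ×ℓ matrix, B a real ℓ×m matrix, Q₁ a positive semidefinite ℓ×ℓ matrix, Q₂ a positive definite m×m matrix, S¹ and S⁰ positive semidefinite ℓ×ℓ matrices, and p ∈ [0,1]. Then the matrix S' = Q₁ + Aᵀ (p S¹ + (1−p) S⁰) A − p · Aᵀ S¹ B (Q₂ + Bᵀ S¹ B)⁻¹ Bᵀ S¹ A is positive semidefinite. -/
open Matrix

lemma psd_smul {n : ℕ} {M : Matrix (Fin n) (Fin n) ℝ} (hM : M.PosSemidef) {c : ℝ}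
    (hc : 0 ≤ c) : (c • M).PosSemidef := by
  rw [posSemidef_iff_dotProduct_mulVec]
  constructor
  · have := hM.1.eq
    unfold Matrix.IsHermitian
    rw [conjTranspose_smul, this]
    simp
  · intro x
    have := hM.dotProduct_mulVec_nonneg x
    simp only [smul_mulVec, dotProduct_smul, smul_eq_mul]
    positivity

lemma schur_psd {l m : ℕ} (A : Matrix (Fin l) (Fin l) ℝ) (B : Matrix (Fin l) (Fin m) ℝ)
    (Q2 : Matrix (Fin m) (Fin m) ℝ) (S1 : Matrix (Fin l) (Fin l) ℝ)
    (hQ2 : Q2.PosDef) (hS1 : S1.PosSemidef) :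
    (Aᵀ * S1 * A - Aᵀ * S1 * B * (Q2 + Bᵀ * S1 * B)⁻¹ * (Bᵀ * S1 * A)).PosSemidef := by
  set M := Q2 + Bᵀ * S1 * B with hMdef
  have hBSB : (Bᵀ * S1 * B).PosSemidef := by
    simpa using hS1.conjTranspose_mul_mul_same B
  have hM : M.PosDef := hQ2.add_posSemidef hBSB
  have hMinv : M⁻¹.PosDef := hM.inv
  have hMsym : Mᵀ = M := hM.isHermitian
  have hMinvsym : M⁻¹ᵀ = M⁻¹ := hMinv.isHermitian
  have hMunit : IsUnit M.det := isUnit_iff_ne_zero.mpr hM.det_pos.ne'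
  have hS1T : S1ᵀ = S1 := by simpa using hS1.1.eq
  set K := M⁻¹ * (Bᵀ * S1 * A) with hKdef
  have hKT : Kᵀ = Aᵀ * S1 * B * M⁻¹ := by
    simp [hKdef, transpose_mul, hMinvsym, hS1T, Matrix.mul_assoc]
  have key : Aᵀ * S1 * A - Aᵀ * S1 * B * M⁻¹ * (Bᵀ * S1 * A)
      = (A - B * K)ᵀ * S1 * (A - B * K) + Kᵀ * Q2 * K := by
    have hKMK : Kᵀ * M * K = Aᵀ * S1 * B * M⁻¹ * (Bᵀ * S1 * A) := by
      rw [hKT, hKdef]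
      rw [show Aᵀ * S1 * B * M⁻¹ * M * (M⁻¹ * (Bᵀ * S1 * A))
          = Aᵀ * S1 * B * (M⁻¹ * M * M⁻¹) * (Bᵀ * S1 * A) by
        simp only [Matrix.mul_assoc]]
      rw [Matrix.nonsing_inv_mul M hMunit, Matrix.one_mul]
    have hKQ2K : Kᵀ * Q2 * K = Kᵀ * M * K - Kᵀ * (Bᵀ * S1 * B) * K := by
      rw [hMdef, Matrix.mul_add, Matrix.add_mul]; abel
    have hABK : (A - B * K)ᵀ * S1 * (A - B * K)
        = Aᵀ * S1 * A - Aᵀ * S1 * (B * K) - Kᵀ * Bᵀ * S1 * A + Kᵀ * (Bᵀ * S1 * B) * K := by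
      simp only [transpose_sub, transpose_mul, Matrix.sub_mul, Matrix.mul_sub,
        Matrix.mul_assoc]
      abel
    rw [hABK, hKQ2K, hKMK]
    have h1 : Aᵀ * S1 * (B * K) = Aᵀ * S1 * B * M⁻¹ * (Bᵀ * S1 * A) := by
      rw [hKdef]; simp [Matrix.mul_assoc]
    have h2 : Kᵀ * Bᵀ * S1 * A = Aᵀ * S1 * B * M⁻¹ * (Bᵀ * S1 * A) := by
      rw [hKT]; simp [Matrix.mul_assoc]
    rw [h1, h2]; abel
  rw [key]
  have p1 : ((A - B * K)ᵀ * S1 * (A - B * K)).PosSemidef := by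
    simpa using hS1.conjTranspose_mul_mul_same (A - B * K)
  have p2 : (Kᵀ * Q2 * K).PosSemidef := by
    simpa using hQ2.posSemidef.conjTranspose_mul_mul_same K
  exact p1.add p2

/-- One step of the backward Riccati-type recursion of the FPD LQG
controller preserves positive semidefiniteness:
`S' = Q₁ + Aᵀ (p S¹ + (1-p) S⁰) A - p · Aᵀ S¹ B (Q₂ + Bᵀ S¹ B)⁻¹ Bᵀ S¹ A` is PSD. -/
theorem stmt3 {l m : ℕ} (A : Matrix (Fin l) (Fin l) ℝ) (B : Matrix (Fin l) (Fin m) ℝ)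
    (Q1 : Matrix (Fin l) (Fin l) ℝ) (Q2 : Matrix (Fin m) (Fin m) ℝ)
    (S1 S0 : Matrix (Fin l) (Fin l) ℝ) (p : ℝ)
    (hQ1 : Q1.PosSemidef) (hQ2 : Q2.PosDef) (hS1 : S1.PosSemidef) (hS0 : S0.PosSemidef)
    (hp0 : 0 ≤ p) (hp1 : p ≤ 1) :
    (Q1 + Aᵀ * (p • S1 + (1 - p) • S0) * A
      - p • (Aᵀ * S1 * B * (Q2 + Bᵀ * S1 * B)⁻¹ * (Bᵀ * S1 * A))).PosSemidef := by
  have hschur := schur_psd A B Q2 S1 hQ2 hS1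
  have e : Q1 + Aᵀ * (p • S1 + (1 - p) • S0) * A
      - p • (Aᵀ * S1 * B * (Q2 + Bᵀ * S1 * B)⁻¹ * (Bᵀ * S1 * A))
      = Q1 + (1 - p) • (Aᵀ * S0 * A)
        + p • (Aᵀ * S1 * A - Aᵀ * S1 * B * (Q2 + Bᵀ * S1 * B)⁻¹ * (Bᵀ * S1 * A)) := by
    simp only [Matrix.mul_add, Matrix.add_mul, Matrix.mul_smul, Matrix.smul_mul, smul_sub]
    abel
  rw [e]
  have hAS0A : (Aᵀ * S0 * A).PosSemidef := by
    simpa using hS0.conjTranspose_mul_mul_same A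
  exact ((hQ1.add (psd_smul hAS0A (by linarith))).add (psd_smul hschur hp0))
end

section
/- Let A ∈ ℝ^{ℓ×ℓ}, B ∈ ℝ^{ℓ×m}, Q₁ PSD, Q₂ positive definite, S¹, S⁰ PSD ℓ×ℓ matrices, and p ∈ [0,1]. For any gain matrix L ∈ ℝ^{m×ℓ}, define S^{sopt}(L) = Q₁ + Aᵀ (p S¹ + (1−p) S⁰) A + p·[ Lᵀ (Q₂ + Bᵀ S¹ B) L − Aᵀ S¹ B L − Lᵀ Bᵀ S¹ A ], and define the optimal step matrix S' = Q₁ + Aᵀ (p S¹ + (1−p) S⁰) A − p·Aᵀ S¹ B (Q₂ + Bᵀ S¹ B)⁻¹ Bᵀ S¹ A. Then S^{sopt}(L) − S' is positive semidefinite; equivalently, the optimal Riccati step dominates the step of any fixed-gain comparative controller in the Loewner order. -/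
open Matrix

lemma psd_smul_aux {n : ℕ} {c : ℝ} (hc : 0 ≤ c) {M : Matrix (Fin n) (Fin n) ℝ}
    (h : M.PosSemidef) : (c • M).PosSemidef := by
  refine ⟨?_, fun x => ?_⟩
  · show (c • M)ᴴ = c • M
    rw [conjTranspose_smul, h.1.eq, star_trivial]
  · exact (h.smul hc).2 x

/-- The optimal Riccati step dominates the step of any fixed-gain
comparative controller in the Loewner order: `S^sopt(L) - S'` is positive semidefinite,
where `S^sopt(L) = Q₁ + Aᵀ(pS¹+(1-p)S⁰)A + p·[Lᵀ(Q₂+BᵀS¹B)L - AᵀS¹BL - LᵀBᵀS¹A]` and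
`S' = Q₁ + Aᵀ(pS¹+(1-p)S⁰)A - p·AᵀS¹B(Q₂+BᵀS¹B)⁻¹BᵀS¹A`. -/
theorem stmt7 {l m : ℕ} (A : Matrix (Fin l) (Fin l) ℝ) (B : Matrix (Fin l) (Fin m) ℝ)
    (Q1 : Matrix (Fin l) (Fin l) ℝ) (Q2 : Matrix (Fin m) (Fin m) ℝ)
    (S1 S0 : Matrix (Fin l) (Fin l) ℝ)
    (hQ1 : Q1.PosSemidef) (hQ2 : Q2.PosDef) (hS1 : S1.PosSemidef) (hS0 : S0.PosSemidef)
    (p : ℝ) (hp0 : 0 ≤ p) (hp1 : p ≤ 1) (L : Matrix (Fin m) (Fin l) ℝ) :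
    let Ssopt : Matrix (Fin l) (Fin l) ℝ := Q1 + Aᵀ * (p • S1 + (1 - p) • S0) * A
      + p • (Lᵀ * (Q2 + Bᵀ * S1 * B) * L - Aᵀ * S1 * B * L - Lᵀ * (Bᵀ * S1 * A))
    let S' : Matrix (Fin l) (Fin l) ℝ := Q1 + Aᵀ * (p • S1 + (1 - p) • S0) * A
      - p • (Aᵀ * S1 * B * (Q2 + Bᵀ * S1 * B)⁻¹ * (Bᵀ * S1 * A))
    (Ssopt - S').PosSemidef := by
  intro Ssopt S'
  set M : Matrix (Fin m) (Fin m) ℝ := Q2 + Bᵀ * S1 * B with hMdef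
  have hM : M.PosDef := hQ2.add_posSemidef (hS1.conjTranspose_mul_mul_same B)
  have hMinv : M⁻¹.PosDef := hM.inv
  have hMsymm : Mᵀ = M := hM.isHermitian.eq
  have hMinvSymm : (M⁻¹)ᵀ = M⁻¹ := hMinv.isHermitian.eq
  have hS1symm : S1ᵀ = S1 := hS1.isHermitian.eq
  have hMunit : IsUnit M.det := hM.det_pos.ne'.isUnit
  set K : Matrix (Fin m) (Fin l) ℝ := M⁻¹ * (Bᵀ * S1 * A) with hKdef
  have h1 : M * K = Bᵀ * S1 * A := by
    rw [hKdef, ← Matrix.mul_assoc, Matrix.mul_nonsing_inv _ hMunit, Matrix.one_mul]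
  have hKt : Kᵀ = Aᵀ * S1 * B * M⁻¹ := by
    rw [hKdef, Matrix.transpose_mul, hMinvSymm, Matrix.transpose_mul, Matrix.transpose_mul,
      hS1symm, Matrix.transpose_transpose]
    simp [Matrix.mul_assoc]
  have h2 : Kᵀ * M = Aᵀ * S1 * B := by
    rw [hKt, Matrix.mul_assoc, Matrix.nonsing_inv_mul _ hMunit, Matrix.mul_one]
  have key : Ssopt - S' = p • ((L - K)ᵀ * M * (L - K)) := by
    have expand : (L - K)ᵀ * M * (L - K)
        = Lᵀ * M * L - Aᵀ * S1 * B * L - Lᵀ * (Bᵀ * S1 * A)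
          + Aᵀ * S1 * B * M⁻¹ * (Bᵀ * S1 * A) := by
      rw [Matrix.transpose_sub, Matrix.sub_mul, Matrix.sub_mul, Matrix.mul_sub, Matrix.mul_sub,
        h2, Matrix.mul_assoc Lᵀ M K, h1, hKdef, ← Matrix.mul_assoc]
      simp only [Matrix.mul_assoc]
      abel
    show Q1 + Aᵀ * (p • S1 + (1 - p) • S0) * A
        + p • (Lᵀ * M * L - Aᵀ * S1 * B * L - Lᵀ * (Bᵀ * S1 * A))
        - (Q1 + Aᵀ * (p • S1 + (1 - p) • S0) * A
          - p • (Aᵀ * S1 * B * M⁻¹ * (Bᵀ * S1 * A)))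
        = p • ((L - K)ᵀ * M * (L - K))
    rw [expand, smul_add]
    abel
  rw [key]
  exact psd_smul_aux hp0 ((hM.posSemidef).conjTranspose_mul_mul_same (L - K))
end
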